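/- If in a layered architecture configuration c a layer l' does not reflexively-transitively syntactically depend on a layer l, then for every replacement behavior f for l and every valuation μ of the open input ports, the configuration semantics of l' is unchanged: ⟦c⟧_{l'}(μ) = ⟦c[l ↦ f]⟧_{l'}(μ). -/
import Mathlib


/-!  A formalization of the layered architecture model:
ports, services, valuations, layers, configurations, attachment closure,
configuration semantics, semantic update, syntactic and semantic dependency. -/

open Set

universe u v

/-- A valuation of a set of ports `P` assigns to each port `p ∈ P` a service in `ty p`. -/
def Val {Port : Type u} {Service : Type v} (ty : Port → Set Service) (P : Set Port) :
    Type (max u v) :=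
  ∀ p, p ∈ P → ty p

/-- Restriction of a valuation to a smaller port set. -/
def Val.restrict {Port : Type u} {Service : Type v} {ty : Port → Set Service}
    {P Q : Set Port} (h : Q ⊆ P) (ν : Val ty P) : Val ty Q :=
  fun p hp => ν p (h hp)

/-- Pointwise agreement of valuations of (possibly different) port sets. -/
def ValEq {Port : Type u} {Service : Type v} {ty : Port → Set Service}
    {P Q : Set Port} (μ : Val ty P) (μ' : Val ty Q) : Prop :=
  ∀ p (h : p ∈ P) (h' : p ∈ Q), (μ p h : Service) = (μ' p h' : Service)

/-- A layer: input ports, output ports and a (nondeterministic) behavior function. -/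
structure Layer (Port : Type u) (Service : Type v) (ty : Port → Set Service) where
  I : Set Port
  O : Set Port
  f : Val ty I → Set (Val ty O)

variable {Port : Type u} {Service : Type v} {ty : Port → Set Service}

/-- All ports of a layer. -/
def Layer.ports (l : Layer Port Service ty) : Set Port := l.I ∪ l.O

/-- Semantic update of a layer: replace its behavior function. -/
def Layer.update (l : Layer Port Service ty) (f : Val ty l.I → Set (Val ty l.O)) :
    Layer Port Service ty := ⟨l.I, l.O, f⟩

/-- The raw data of a layered architecture configuration: a set of layers and an
attachment (a partial map from ports to ports, `A i = some o` meaning input port `i`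
is attached to output port `o`). -/
structure Config (Port : Type u) (Service : Type v) (ty : Port → Set Service) where
  L : Set (Layer Port Service ty)
  A : Port → Option Port

/-- All input ports occurring in the configuration. -/
def Config.inPorts (c : Config Port Service ty) : Set Port := ⋃ l ∈ c.L, l.I

/-- All output ports occurring in the configuration. -/
def Config.outPorts (c : Config Port Service ty) : Set Port := ⋃ l ∈ c.L, l.O

/-- All ports occurring in the configuration. -/
def Config.ports (c : Config Port Service ty) : Set Port := ⋃ l ∈ c.L, l.ports

/-- The open input ports: input ports not attached. -/
def Config.openIn (c : Config Port Service ty) : Set Port :=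
  c.inPorts \ {p | (c.A p).isSome}

/-- The axioms of a layered architecture configuration, relative to a global
partition of the ports into input ports `Inp` and output ports `Outp`. -/
structure IsLAC (Inp Outp : Set Port) (c : Config Port Service ty) : Prop where
  io_disj : Disjoint Inp Outp
  inputs : ∀ l ∈ c.L, l.I ⊆ Inp
  outputs : ∀ l ∈ c.L, l.O ⊆ Outp
  ports_disj : ∀ k ∈ c.L, ∀ l ∈ c.L, k = l ∨ Disjoint k.ports l.ports
  domA : ∀ i o, c.A i = some o → i ∈ c.inPorts ∧ o ∈ c.outPorts
  compat : ∀ i o, c.A i = some o → ty o ⊆ ty i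

instance : Nonempty (Layer Port Service ty) := ⟨⟨∅, ∅, fun _ => ∅⟩⟩

/-- The layer owning a port (unique in a configuration by port-disjointness). -/
noncomputable def Config.proj (c : Config Port Service ty) (p : Port) :
    Layer Port Service ty :=
  Classical.epsilon fun l => l ∈ c.L ∧ p ∈ l.ports

/-- The attachment closure `out(l)*`: the least set of ports of `c` containing `out(l)`,
closed under the attachment and under adding all input ports of any layer owning an
output port in the set. -/
def Config.star (c : Config Port Service ty) (l : Layer Port Service ty) : Set Port :=
  ⋂₀ {P | P ⊆ c.ports ∧ l.O ⊆ P ∧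
      (∀ i o, c.A i = some o → i ∈ P → o ∈ P) ∧
      (∀ o, o ∈ c.outPorts → o ∈ P → (c.proj o).I ⊆ P)}

/-- `ν` is a consistent valuation of the attachment closure `out(l)*` for the
open-input valuation `μ`. -/
def Config.witness (c : Config Port Service ty) (l : Layer Port Service ty)
    (μ : Val ty c.openIn) (ν : Val ty (c.star l)) : Prop :=
  (∀ p (h1 : p ∈ c.openIn) (h2 : p ∈ c.star l),
      (μ p h1 : Service) = (ν p h2 : Service)) ∧
  (∀ i o, c.A i = some o → ∀ (hi : i ∈ c.star l) (ho : o ∈ c.star l),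
      (ν i hi : Service) = (ν o ho : Service)) ∧
  (∀ o, o ∈ c.star l → o ∈ c.outPorts →
      ∃ (hI : (c.proj o).I ⊆ c.star l) (ξ : Val ty (c.proj o).O),
        ξ ∈ (c.proj o).f (Val.restrict hI ν) ∧
        ∀ p (h1 : p ∈ (c.proj o).O) (h2 : p ∈ c.star l),
          (ξ p h1 : Service) = (ν p h2 : Service))

/-- Configuration semantics of layer `l` in configuration `c`. -/
noncomputable def Config.sem (c : Config Port Service ty) (l : Layer Port Service ty)
    (μ : Val ty c.openIn) : Set (Val ty l.O) :=
  {κ | ∃ (ν : Val ty (c.star l)) (hO : l.O ⊆ c.star l),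
      κ = Val.restrict hO ν ∧ c.witness l μ ν}

/-- Semantic update of a configuration: replace the behavior function of layer `l`. -/
def Config.update (c : Config Port Service ty) (l : Layer Port Service ty)
    (f : Val ty l.I → Set (Val ty l.O)) : Config Port Service ty :=
  ⟨(c.L \ {l}) ∪ {l.update f}, c.A⟩

/-- Syntactic dependency: `l'` syntactically depends on `l`. -/
def Config.syndep (c : Config Port Service ty) (l l' : Layer Port Service ty) : Prop :=
  ∃ o ∈ l.O, ∃ i ∈ l'.I, c.A i = some o

open scoped Classical in
/-- Semantic dependency: `l'` semantically depends on `l`, i.e. some behavior update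
of `l` changes the configuration semantics of `l'` (of the updated layer if `l = l'`). -/
noncomputable def Config.semdep (c : Config Port Service ty)
    (l l' : Layer Port Service ty) : Prop :=
  if l = l' then
    ∃ (f : Val ty l.I → Set (Val ty l.O)) (μ : Val ty c.openIn)
      (μ' : Val ty (c.update l f).openIn),
      ValEq μ μ' ∧ c.sem l μ ≠ (c.update l f).sem (l.update f) μ'
  else
    ∃ (f : Val ty l.I → Set (Val ty l.O)) (μ : Val ty c.openIn)
      (μ' : Val ty (c.update l f).openIn),
      ValEq μ μ' ∧ c.sem l' μ ≠ (c.update l f).sem l' μ'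

/-- A configuration is usable iff some valuation of the open input ports makes the
configuration semantics of every layer nonempty. -/
def Config.usable (c : Config Port Service ty) : Prop :=
  ∃ μ : Val ty c.openIn, ∀ l ∈ c.L, c.sem l μ ≠ ∅

variable {Inp Outp : Set Port}

/-! ### Auxiliary lemmas -/

lemma mem_update_L {c : Config Port Service ty} {l k : Layer Port Service ty}
    {f : Val ty l.I → Set (Val ty l.O)} :
    k ∈ (c.update l f).L ↔ (k ∈ c.L ∧ k ≠ l) ∨ k = l.update f := by
  simp only [Config.update, Set.mem_union, Set.mem_diff, Set.mem_singleton_iff]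

lemma update_ports_eq (c : Config Port Service ty) {l : Layer Port Service ty}
    (hl : l ∈ c.L) (f : Val ty l.I → Set (Val ty l.O)) :
    (c.update l f).ports = c.ports := by
  ext p
  simp only [Config.ports, Set.mem_iUnion, exists_prop]
  constructor
  · rintro ⟨k, hk, hp⟩
    rcases mem_update_L.mp hk with ⟨hk, _⟩ | rfl
    · exact ⟨k, hk, hp⟩
    · exact ⟨l, hl, hp⟩
  · rintro ⟨k, hk, hp⟩
    by_cases hkl : k = l
    · exact ⟨l.update f, mem_update_L.mpr (Or.inr rfl), hkl ▸ hp⟩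
    · exact ⟨k, mem_update_L.mpr (Or.inl ⟨hk, hkl⟩), hp⟩

lemma update_inPorts_eq (c : Config Port Service ty) {l : Layer Port Service ty}
    (hl : l ∈ c.L) (f : Val ty l.I → Set (Val ty l.O)) :
    (c.update l f).inPorts = c.inPorts := by
  ext p
  simp only [Config.inPorts, Set.mem_iUnion, exists_prop]
  constructor
  · rintro ⟨k, hk, hp⟩
    rcases mem_update_L.mp hk with ⟨hk, _⟩ | rfl
    · exact ⟨k, hk, hp⟩
    · exact ⟨l, hl, hp⟩
  · rintro ⟨k, hk, hp⟩
    by_cases hkl : k = l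
    · exact ⟨l.update f, mem_update_L.mpr (Or.inr rfl), hkl ▸ hp⟩
    · exact ⟨k, mem_update_L.mpr (Or.inl ⟨hk, hkl⟩), hp⟩

lemma update_outPorts_eq (c : Config Port Service ty) {l : Layer Port Service ty}
    (hl : l ∈ c.L) (f : Val ty l.I → Set (Val ty l.O)) :
    (c.update l f).outPorts = c.outPorts := by
  ext p
  simp only [Config.outPorts, Set.mem_iUnion, exists_prop]
  constructor
  · rintro ⟨k, hk, hp⟩
    rcases mem_update_L.mp hk with ⟨hk, _⟩ | rfl
    · exact ⟨k, hk, hp⟩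
    · exact ⟨l, hl, hp⟩
  · rintro ⟨k, hk, hp⟩
    by_cases hkl : k = l
    · exact ⟨l.update f, mem_update_L.mpr (Or.inr rfl), hkl ▸ hp⟩
    · exact ⟨k, mem_update_L.mpr (Or.inl ⟨hk, hkl⟩), hp⟩

lemma update_openIn_eq (c : Config Port Service ty) {l : Layer Port Service ty}
    (hl : l ∈ c.L) (f : Val ty l.I → Set (Val ty l.O)) :
    (c.update l f).openIn = c.openIn := by
  unfold Config.openIn
  rw [update_inPorts_eq c hl f]
  rfl

lemma outPorts_subset_ports (c : Config Port Service ty) :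
    c.outPorts ⊆ c.ports := by
  intro p hp
  simp only [Config.outPorts, Set.mem_iUnion, exists_prop] at hp
  obtain ⟨k, hk, hpk⟩ := hp
  simp only [Config.ports, Set.mem_iUnion, exists_prop]
  exact ⟨k, hk, Or.inr hpk⟩

lemma mem_ports_iff {c : Config Port Service ty} {p : Port} :
    p ∈ c.ports ↔ ∃ k, k ∈ c.L ∧ p ∈ k.ports := by
  simp [Config.ports]

lemma proj_eq {c : Config Port Service ty}
    (hd : ∀ k ∈ c.L, ∀ m ∈ c.L, k = m ∨ Disjoint k.ports m.ports)
    {k : Layer Port Service ty} (hk : k ∈ c.L) {p : Port} (hp : p ∈ k.ports) :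
    c.proj p = k := by
  have hex : ∃ m : Layer Port Service ty, m ∈ c.L ∧ p ∈ m.ports := ⟨k, hk, hp⟩
  have hs : c.proj p ∈ c.L ∧ p ∈ (c.proj p).ports := Classical.epsilon_spec hex
  rcases hd _ hs.1 _ hk with h | h
  · exact h
  · exact absurd hp (Set.disjoint_left.mp h hs.2)

lemma update_disj {c : Config Port Service ty} (hc : IsLAC Inp Outp c)
    {l : Layer Port Service ty} (hl : l ∈ c.L)
    (f : Val ty l.I → Set (Val ty l.O)) :
    ∀ k ∈ (c.update l f).L, ∀ m ∈ (c.update l f).L,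
      k = m ∨ Disjoint k.ports m.ports := by
  intro k hk m hm
  have hup : (l.update f).ports = l.ports := rfl
  rcases mem_update_L.mp hk with ⟨hk, hkl⟩ | rfl <;>
    rcases mem_update_L.mp hm with ⟨hm, hml⟩ | rfl
  · exact hc.ports_disj k hk m hm
  · rcases hc.ports_disj k hk l hl with h | h
    · exact absurd h hkl
    · exact Or.inr (hup ▸ h)
  · rcases hc.ports_disj l hl m hm with h | h
    · exact absurd h.symm hml
    · exact Or.inr (hup ▸ h)
  · exact Or.inl rfl

lemma star_subset_ports {c : Config Port Service ty} (hc : IsLAC Inp Outp c)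
    {l' : Layer Port Service ty} (hl' : l' ∈ c.L) : c.star l' ⊆ c.ports := by
  apply Set.sInter_subset_of_mem
  refine ⟨subset_rfl, ?_, ?_, ?_⟩
  · intro p hp
    exact mem_ports_iff.mpr ⟨l', hl', Or.inr hp⟩
  · intro i o hio _
    exact outPorts_subset_ports c (hc.domA i o hio).2
  · intro o ho _
    have hex : ∃ m : Layer Port Service ty, m ∈ c.L ∧ o ∈ m.ports := by
      simp only [Config.outPorts, Set.mem_iUnion, exists_prop] at ho
      obtain ⟨k, hk, hok⟩ := ho
      exact ⟨k, hk, Or.inr hok⟩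
    have hs : c.proj o ∈ c.L ∧ o ∈ (c.proj o).ports := Classical.epsilon_spec hex
    intro p hp
    exact mem_ports_iff.mpr ⟨c.proj o, hs.1, Or.inl hp⟩

lemma not_mem_star {c : Config Port Service ty} (hc : IsLAC Inp Outp c)
    {l l' : Layer Port Service ty} (hl : l ∈ c.L) (hl' : l' ∈ c.L)
    (h : ¬ Relation.ReflTransGen c.syndep l l') {p : Port} (hp : p ∈ l.ports) :
    p ∉ c.star l' := by
  intro hps
  set P0 : Set Port :=
    {q | ∃ k, k ∈ c.L ∧ Relation.ReflTransGen c.syndep k l' ∧ q ∈ k.ports} with hP0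
  have hmem : P0 ∈ {P | P ⊆ c.ports ∧ l'.O ⊆ P ∧
      (∀ i o, c.A i = some o → i ∈ P → o ∈ P) ∧
      (∀ o, o ∈ c.outPorts → o ∈ P → (c.proj o).I ⊆ P)} := by
    refine ⟨?_, ?_, ?_, ?_⟩
    · rintro q ⟨k, hk, _, hq⟩
      exact mem_ports_iff.mpr ⟨k, hk, hq⟩
    · intro q hq
      exact ⟨l', hl', Relation.ReflTransGen.refl, Or.inr hq⟩
    · rintro i o hio ⟨k, hk, hrt, hik⟩
      -- i is an input port of k
      have hiin : i ∈ c.inPorts := (hc.domA i o hio).1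
      simp only [Config.inPorts, Set.mem_iUnion, exists_prop] at hiin
      obtain ⟨m, hm, him⟩ := hiin
      have hmk : m = k := by
        rcases hc.ports_disj m hm k hk with he | he
        · exact he
        · exact absurd hik (Set.disjoint_left.mp he (Or.inl him))
      subst hmk
      -- o is an output port of some layer n
      have hoout : o ∈ c.outPorts := (hc.domA i o hio).2
      simp only [Config.outPorts, Set.mem_iUnion, exists_prop] at hoout
      obtain ⟨n, hn, hon⟩ := hoout
      have hsyn : c.syndep n m := ⟨o, hon, i, him, hio⟩
      exact ⟨n, hn, Relation.ReflTransGen.head hsyn hrt, Or.inr hon⟩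
    · rintro o _ ⟨k, hk, hrt, hok⟩
      have hpr : c.proj o = k := proj_eq hc.ports_disj hk hok
      rw [hpr]
      intro q hq
      exact ⟨k, hk, hrt, Or.inl hq⟩
  have hpP0 : p ∈ P0 := Set.mem_sInter.mp hps P0 hmem
  obtain ⟨k, hk, hrt, hpk⟩ := hpP0
  have hkl : k = l := by
    rcases hc.ports_disj k hk l hl with he | he
    · exact he
    · exact absurd hp (Set.disjoint_left.mp he hpk)
  exact h (hkl ▸ hrt)

lemma update_proj_I {c : Config Port Service ty} (hc : IsLAC Inp Outp c)
    {l : Layer Port Service ty} (hl : l ∈ c.L) (f : Val ty l.I → Set (Val ty l.O))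
    {p : Port} (hp : p ∈ c.ports) :
    ((c.update l f).proj p).I = (c.proj p).I := by
  obtain ⟨k, hk, hpk⟩ := mem_ports_iff.mp hp
  have h1 : c.proj p = k := proj_eq hc.ports_disj hk hpk
  by_cases hkl : k = l
  · have hpl : p ∈ l.ports := hkl ▸ hpk
    have h2 : (c.update l f).proj p = l.update f :=
      proj_eq (update_disj hc hl f) (mem_update_L.mpr (Or.inr rfl)) hpl
    rw [h1, h2, hkl]
    rfl
  · have h2 : (c.update l f).proj p = k :=
      proj_eq (update_disj hc hl f) (mem_update_L.mpr (Or.inl ⟨hk, hkl⟩)) hpk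
    rw [h1, h2]

lemma update_proj_eq {c : Config Port Service ty} (hc : IsLAC Inp Outp c)
    {l : Layer Port Service ty} (hl : l ∈ c.L) (f : Val ty l.I → Set (Val ty l.O))
    {p : Port} (hp : p ∈ c.ports) (hpl : p ∉ l.ports) :
    (c.update l f).proj p = c.proj p := by
  obtain ⟨k, hk, hpk⟩ := mem_ports_iff.mp hp
  have hkl : k ≠ l := fun he => hpl (he ▸ hpk)
  have h1 : c.proj p = k := proj_eq hc.ports_disj hk hpk
  have h2 : (c.update l f).proj p = k :=
    proj_eq (update_disj hc hl f) (mem_update_L.mpr (Or.inl ⟨hk, hkl⟩)) hpk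
  rw [h1, h2]

lemma update_star_eq {c : Config Port Service ty} (hc : IsLAC Inp Outp c)
    {l l' : Layer Port Service ty} (hl : l ∈ c.L)
    (f : Val ty l.I → Set (Val ty l.O)) :
    (c.update l f).star l' = c.star l' := by
  unfold Config.star
  refine congrArg Set.sInter ?_
  ext P
  simp only [Set.mem_setOf_eq]
  have hports : (c.update l f).ports = c.ports := update_ports_eq c hl f
  have hout : (c.update l f).outPorts = c.outPorts := update_outPorts_eq c hl f
  have hA : (c.update l f).A = c.A := rfl
  rw [hports, hout, hA]
  constructor <;> rintro ⟨h1, h2, h3, h4⟩ <;> refine ⟨h1, h2, h3, fun o ho hoP => ?_⟩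
  · rw [← update_proj_I hc hl f (outPorts_subset_ports c ho)]
    exact h4 o ho hoP
  · rw [update_proj_I hc hl f (outPorts_subset_ports c ho)]
    exact h4 o ho hoP

/-- A parameterized version of the configuration semantics, for congruence. -/
def semAux (S : Set Port) (pr : Port → Layer Port Service ty) (A : Port → Option Port)
    (oIn outP O : Set Port) (μ : Val ty oIn) : Set (Val ty O) :=
  {κ | ∃ (ν : Val ty S) (hO : O ⊆ S), κ = Val.restrict hO ν ∧
    ((∀ p (h1 : p ∈ oIn) (h2 : p ∈ S),
        (μ p h1 : Service) = (ν p h2 : Service)) ∧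
     (∀ i o, A i = some o → ∀ (hi : i ∈ S) (ho : o ∈ S),
        (ν i hi : Service) = (ν o ho : Service)) ∧
     (∀ o, o ∈ S → o ∈ outP →
        ∃ (hI : (pr o).I ⊆ S) (ξ : Val ty (pr o).O),
          ξ ∈ (pr o).f (Val.restrict hI ν) ∧
          ∀ p (h1 : p ∈ (pr o).O) (h2 : p ∈ S),
            (ξ p h1 : Service) = (ν p h2 : Service)))}

lemma sem_eq_semAux (c : Config Port Service ty) (l : Layer Port Service ty)
    (μ : Val ty c.openIn) :
    c.sem l μ = semAux (c.star l) c.proj c.A c.openIn c.outPorts l.O μ := rfl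

lemma semAux_congr {S S' : Set Port} (hS : S = S')
    {pr pr' : Port → Layer Port Service ty}
    {A A' : Port → Option Port} (hA : A = A')
    {oIn oIn' outP outP' : Set Port} (hIn : oIn = oIn') (hOut : outP = outP')
    {O : Set Port} {μ : Val ty oIn} {μ' : Val ty oIn'} (hμ : ValEq μ μ')
    (hpr : ∀ o ∈ S, o ∈ outP → pr o = pr' o) :
    semAux S pr A oIn outP O μ = semAux S' pr' A' oIn' outP' O μ' := by
  subst hS hA hIn hOut
  have hμ' : μ = μ' := by
    funext p hp
    exact Subtype.ext (hμ p hp hp)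
  subst hμ'
  ext κ
  simp only [semAux, Set.mem_setOf_eq]
  constructor <;> rintro ⟨ν, hO, hκ, w1, w2, w3⟩ <;>
    refine ⟨ν, hO, hκ, w1, w2, fun o hS hP => ?_⟩
  · rw [← hpr o hS hP]
    exact w3 o hS hP
  · rw [hpr o hS hP]
    exact w3 o hS hP

/-- if `l'` does not reflexively-transitively syntactically depend on
`l`, then any behavior update of `l` leaves the configuration semantics of `l'`
unchanged. -/
theorem sem_unchanged_of_not_syndep_rt (c : Config Port Service ty)
    (hc : IsLAC Inp Outp c) (l l' : Layer Port Service ty)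
    (hl : l ∈ c.L) (hl' : l' ∈ c.L)
    (h : ¬ Relation.ReflTransGen c.syndep l l') :
    ∀ (f : Val ty l.I → Set (Val ty l.O)) (μ : Val ty c.openIn)
      (μ' : Val ty (c.update l f).openIn), ValEq μ μ' →
      c.sem l' μ = (c.update l f).sem l' μ' := by
  intro f μ μ' hμ
  have hstar : (c.update l f).star l' = c.star l' := update_star_eq hc hl f
  have hopen : (c.update l f).openIn = c.openIn := update_openIn_eq c hl f
  have hout : (c.update l f).outPorts = c.outPorts := update_outPorts_eq c hl f
  have hproj : ∀ o ∈ c.star l', o ∈ c.outPorts → c.proj o = (c.update l f).proj o := by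
    intro o hoS hoO
    exact (update_proj_eq hc hl f (star_subset_ports hc hl' hoS)
      (fun hmem => not_mem_star hc hl hl' h hmem hoS)).symm
  rw [sem_eq_semAux, sem_eq_semAux]
  exact semAux_congr hstar.symm rfl hopen.symm hout.symm hμ hproj
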